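/- arXiv:2111.11087 — 2 statements merged into one kernel-verified Lean document; each statement's English description precedes it below -/
import Mathlib

section
/- Let Ω ⊂ ℝ^d be bounded and let s, s' : cl(Ω) → ℝ be continuous functions with 0 < m ≤ s(x), s'(x) ≤ M for all x. Define T(x) (resp. T'(x)) as the infimum over Lipschitz paths ξ from x₀ to x in cl(Ω) of ∫₀¹ s(ξ(r))|ξ'(r)| dr (resp. with s'). Then |T(x) - T'(x)| ≤ (sup_{y ∈ cl(Ω)} |s(y) - s'(y)|) · (M/m) · min{T(x), T'(x)}/m, and in particular |T(x) - T'(x)| ≤ ‖s - s'‖_∞ · T'(x)/m. -/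
open MeasureTheory Set

/-- A Lipschitz admissible path from `x₀` to `x` inside `closure Ω`, together with
its derivative `ξ'` on `[0,1]`. -/
def IsAdmissiblePath {d : ℕ} (Ω : Set (EuclideanSpace ℝ (Fin d)))
    (x₀ x : EuclideanSpace ℝ (Fin d))
    (ξ ξ' : ℝ → EuclideanSpace ℝ (Fin d)) : Prop :=
  (∃ K : NNReal, LipschitzWith K ξ) ∧
    (∀ r ∈ Icc (0 : ℝ) 1, ξ r ∈ closure Ω) ∧ ξ 0 = x₀ ∧ ξ 1 = x ∧
    (∀ r ∈ Icc (0 : ℝ) 1, HasDerivAt ξ (ξ' r) r)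

/-- The travel-time value function given by the path-infimum (Fermat) formula. -/
noncomputable def travelTime {d : ℕ} (Ω : Set (EuclideanSpace ℝ (Fin d)))
    (s : EuclideanSpace ℝ (Fin d) → ℝ)
    (x₀ x : EuclideanSpace ℝ (Fin d)) : ℝ :=
  sInf {c : ℝ | ∃ ξ ξ' : ℝ → EuclideanSpace ℝ (Fin d),
    IsAdmissiblePath Ω x₀ x ξ ξ' ∧ c = ∫ r in (0:ℝ)..1, s (ξ r) * ‖ξ' r‖}

lemma aux_integrable {d : ℕ} {Ω : Set (EuclideanSpace ℝ (Fin d))}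
    {x₀ x : EuclideanSpace ℝ (Fin d)} {ξ ξ' : ℝ → EuclideanSpace ℝ (Fin d)}
    (hadm : IsAdmissiblePath Ω x₀ x ξ ξ')
    {s : EuclideanSpace ℝ (Fin d) → ℝ} (hs : ContinuousOn s (closure Ω))
    {M : ℝ} (hM : ∀ y ∈ closure Ω, |s y| ≤ M) :
    IntervalIntegrable (fun r => s (ξ r) * ‖ξ' r‖) volume 0 1 := by
  obtain ⟨⟨K, hK⟩, hmem, -, -, hder⟩ := hadm
  rw [intervalIntegrable_iff, uIoc_of_le (by norm_num : (0:ℝ) ≤ 1)]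
  have hsub : Ioc (0:ℝ) 1 ⊆ Icc 0 1 := Ioc_subset_Icc_self
  -- the candidate measurable version
  have hcont : ContinuousOn (fun r => s (ξ r)) (Icc 0 1) :=
    hs.comp hK.continuous.continuousOn hmem
  have hmeas1 : AEStronglyMeasurable (fun r => s (ξ r))
      (volume.restrict (Ioc (0:ℝ) 1)) := by
    exact AEStronglyMeasurable.mono_measure
      (hcont.aestronglyMeasurable measurableSet_Icc)
      (Measure.restrict_mono hsub le_rfl)
  have hmeas2 : AEStronglyMeasurable (fun r => ‖deriv ξ r‖)
      (volume.restrict (Ioc (0:ℝ) 1)) :=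
    (stronglyMeasurable_deriv ξ).norm.aestronglyMeasurable
  have heq : ∀ r ∈ Ioc (0:ℝ) 1, ‖deriv ξ r‖ = ‖ξ' r‖ := fun r hr => by
    rw [(hder r (hsub hr)).deriv]
  have hmeas : AEStronglyMeasurable (fun r => s (ξ r) * ‖ξ' r‖)
      (volume.restrict (Ioc (0:ℝ) 1)) := by
    refine (hmeas1.mul hmeas2).congr ?_
    filter_upwards [ae_restrict_of_forall_mem measurableSet_Ioc heq] with r hr
    simp only [Pi.mul_apply]
    rw [hr]
  refine Integrable.mono' (g := fun _ => M * K) (integrable_const _) hmeas ?_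
  filter_upwards [ae_restrict_of_forall_mem measurableSet_Ioc
    (fun r (hr : r ∈ Ioc (0:ℝ) 1) => hr)] with r hr
  have h1 : |s (ξ r)| ≤ M := hM _ (hmem r (hsub hr))
  have h2 : ‖ξ' r‖ ≤ K := (hder r (hsub hr)).le_of_lipschitz hK
  calc ‖s (ξ r) * ‖ξ' r‖‖ = |s (ξ r)| * ‖ξ' r‖ := by
        rw [Real.norm_eq_abs, abs_mul, abs_norm]
    _ ≤ M * K := mul_le_mul h1 h2 (norm_nonneg _) ((abs_nonneg _).trans h1)

lemma aux_nonneg_mem {d : ℕ} {Ω : Set (EuclideanSpace ℝ (Fin d))}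
    {x₀ x : EuclideanSpace ℝ (Fin d)}
    {s : EuclideanSpace ℝ (Fin d) → ℝ} (hs0 : ∀ y ∈ closure Ω, 0 ≤ s y)
    {c : ℝ} (hc : c ∈ {c : ℝ | ∃ ξ ξ' : ℝ → EuclideanSpace ℝ (Fin d),
      IsAdmissiblePath Ω x₀ x ξ ξ' ∧ c = ∫ r in (0:ℝ)..1, s (ξ r) * ‖ξ' r‖}) :
    0 ≤ c := by
  obtain ⟨ξ, ξ', ⟨-, hmem, -, -, -⟩, rfl⟩ := hc
  refine intervalIntegral.integral_nonneg (by norm_num) fun r hr => ?_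
  exact mul_nonneg (hs0 _ (hmem r hr)) (norm_nonneg _)

lemma aux_travelTime_nonneg {d : ℕ} {Ω : Set (EuclideanSpace ℝ (Fin d))}
    {x₀ x : EuclideanSpace ℝ (Fin d)}
    {s : EuclideanSpace ℝ (Fin d) → ℝ} (hs0 : ∀ y ∈ closure Ω, 0 ≤ s y) :
    0 ≤ travelTime Ω s x₀ x :=
  Real.sInf_nonneg fun _ hc => aux_nonneg_mem hs0 hc

/-- Key comparison: if `s₁ ≤ c * s₂` on `closure Ω`, then travel times compare. -/
lemma aux_travelTime_le {d : ℕ} {Ω : Set (EuclideanSpace ℝ (Fin d))}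
    {x₀ x : EuclideanSpace ℝ (Fin d)}
    {s₁ s₂ : EuclideanSpace ℝ (Fin d) → ℝ}
    (hs₁ : ContinuousOn s₁ (closure Ω)) (hs₂ : ContinuousOn s₂ (closure Ω))
    {m M : ℝ} (hm : 0 < m)
    (hb : ∀ y ∈ closure Ω, m ≤ s₁ y ∧ s₁ y ≤ M ∧ m ≤ s₂ y ∧ s₂ y ≤ M)
    {c : ℝ} (hc : 0 < c) (hle : ∀ y ∈ closure Ω, s₁ y ≤ c * s₂ y) :
    travelTime Ω s₁ x₀ x ≤ c * travelTime Ω s₂ x₀ x := by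
  have hM₁ : ∀ y ∈ closure Ω, |s₁ y| ≤ M := fun y hy => by
    have h := hb y hy; rw [abs_of_pos (hm.trans_le h.1)]; exact h.2.1
  have hM₂ : ∀ y ∈ closure Ω, |s₂ y| ≤ M := fun y hy => by
    have h := hb y hy; rw [abs_of_pos (hm.trans_le h.2.2.1)]; exact h.2.2.2
  set A₁ := {v : ℝ | ∃ ξ ξ' : ℝ → EuclideanSpace ℝ (Fin d),
      IsAdmissiblePath Ω x₀ x ξ ξ' ∧ v = ∫ r in (0:ℝ)..1, s₁ (ξ r) * ‖ξ' r‖} with hA₁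
  set A₂ := {v : ℝ | ∃ ξ ξ' : ℝ → EuclideanSpace ℝ (Fin d),
      IsAdmissiblePath Ω x₀ x ξ ξ' ∧ v = ∫ r in (0:ℝ)..1, s₂ (ξ r) * ‖ξ' r‖} with hA₂
  have hbdd : BddBelow A₁ :=
    ⟨0, fun v hv => aux_nonneg_mem (fun y hy => (hm.trans_le (hb y hy).1).le) hv⟩
  rcases A₂.eq_empty_or_nonempty with he | hne
  · have he₁ : A₁ = ∅ := by
      rw [Set.eq_empty_iff_forall_notMem] at he ⊢
      rintro v ⟨ξ, ξ', hadm, -⟩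
      exact he _ ⟨ξ, ξ', hadm, rfl⟩
    show sInf A₁ ≤ c * sInf A₂
    rw [he, he₁, Real.sInf_empty]
    simp
  · show sInf A₁ ≤ c * sInf A₂
    rw [← div_le_iff₀' hc]
    refine le_csInf hne ?_
    rintro v ⟨ξ, ξ', hadm, rfl⟩
    rw [div_le_iff₀ hc]
    have hmem := hadm.2.1
    have hkey : (∫ r in (0:ℝ)..1, s₁ (ξ r) * ‖ξ' r‖) ≤
        c * ∫ r in (0:ℝ)..1, s₂ (ξ r) * ‖ξ' r‖ := by
      rw [← intervalIntegral.integral_const_mul]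
      refine intervalIntegral.integral_mono_on (by norm_num)
        (aux_integrable hadm hs₁ hM₁)
        ((aux_integrable hadm hs₂ hM₂).const_mul c) fun r hr => ?_
      have hy := hmem r hr
      rw [← mul_assoc]
      exact mul_le_mul_of_nonneg_right (hle _ hy) (norm_nonneg _)
    calc sInf A₁ ≤ ∫ r in (0:ℝ)..1, s₁ (ξ r) * ‖ξ' r‖ :=
          csInf_le hbdd ⟨ξ, ξ', hadm, rfl⟩
      _ ≤ c * ∫ r in (0:ℝ)..1, s₂ (ξ r) * ‖ξ' r‖ := hkey
      _ = (∫ r in (0:ℝ)..1, s₂ (ξ r) * ‖ξ' r‖) * c := mul_comm _ _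

theorem stmt_10 {d : ℕ} (Ω : Set (EuclideanSpace ℝ (Fin d)))
    (hΩopen : IsOpen Ω) (hΩ : Bornology.IsBounded Ω)
    (s s' : EuclideanSpace ℝ (Fin d) → ℝ)
    (hs : ContinuousOn s (closure Ω)) (hs' : ContinuousOn s' (closure Ω))
    (m M : ℝ) (hm : 0 < m)
    (hbound : ∀ y ∈ closure Ω, m ≤ s y ∧ s y ≤ M ∧ m ≤ s' y ∧ s' y ≤ M)
    (x₀ x : EuclideanSpace ℝ (Fin d)) (hx₀ : x₀ ∈ closure Ω) (hx : x ∈ closure Ω) :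
    |travelTime Ω s x₀ x - travelTime Ω s' x₀ x| ≤
        (sSup {v : ℝ | ∃ y ∈ closure Ω, v = |s y - s' y|}) * (M / m) *
          min (travelTime Ω s x₀ x) (travelTime Ω s' x₀ x) / m ∧
      |travelTime Ω s x₀ x - travelTime Ω s' x₀ x| ≤
        (sSup {v : ℝ | ∃ y ∈ closure Ω, v = |s y - s' y|}) * travelTime Ω s' x₀ x / m := by
  set S := sSup {v : ℝ | ∃ y ∈ closure Ω, v = |s y - s' y|} with hSdef
  set T := travelTime Ω s x₀ x with hTdef
  set T' := travelTime Ω s' x₀ x with hT'def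
  have hmM : m ≤ M := (hbound x₀ hx₀).1.trans (hbound x₀ hx₀).2.1
  -- S bounds all |s y - s' y|
  have hSbdd : BddAbove {v : ℝ | ∃ y ∈ closure Ω, v = |s y - s' y|} := by
    refine ⟨2 * M, ?_⟩
    rintro v ⟨y, hy, rfl⟩
    obtain ⟨h1, h2, h3, h4⟩ := hbound y hy
    calc |s y - s' y| ≤ |s y| + |s' y| := abs_sub _ _
      _ ≤ M + M := add_le_add
          (by rw [abs_of_pos (hm.trans_le h1)]; exact h2)
          (by rw [abs_of_pos (hm.trans_le h3)]; exact h4)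
      _ = 2 * M := by ring
  have hSmem : ∀ y ∈ closure Ω, |s y - s' y| ≤ S := fun y hy =>
    le_csSup hSbdd ⟨y, hy, rfl⟩
  have hS0 : 0 ≤ S := (abs_nonneg _).trans (hSmem x₀ hx₀)
  set q : ℝ := 1 + S / m with hq
  have hq0 : 0 < q := by positivity
  have hleq : ∀ (f g : EuclideanSpace ℝ (Fin d) → ℝ),
      (∀ y ∈ closure Ω, |f y - g y| ≤ S) → (∀ y ∈ closure Ω, m ≤ g y) →
      ∀ y ∈ closure Ω, f y ≤ q * g y := by
    intro f g hfg hgm y hy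
    have h1 : f y ≤ g y + S := by
      have := (abs_le.mp (hfg y hy)).2
      linarith
    have h2 : S ≤ S / m * g y := by
      have : S / m * m ≤ S / m * g y :=
        mul_le_mul_of_nonneg_left (hgm y hy) (by positivity)
      rwa [div_mul_cancel₀ _ hm.ne'] at this
    calc f y ≤ g y + S := h1
      _ ≤ g y + S / m * g y := by linarith
      _ = q * g y := by rw [hq]; ring
  have hTT' : T ≤ q * T' :=
    aux_travelTime_le hs hs' hm hbound hq0
      (hleq s s' hSmem fun y hy => (hbound y hy).2.2.1)
  have hT'T : T' ≤ q * T := by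
    refine aux_travelTime_le (M := M) hs' hs hm (fun y hy => ?_) hq0
      (hleq s' s (fun y hy => by rw [abs_sub_comm]; exact hSmem y hy)
        fun y hy => (hbound y hy).1)
    obtain ⟨h1, h2, h3, h4⟩ := hbound y hy
    exact ⟨h3, h4, h1, h2⟩
  have hT0 : 0 ≤ T := aux_travelTime_nonneg fun y hy => (hm.trans_le (hbound y hy).1).le
  have hT'0 : 0 ≤ T' := aux_travelTime_nonneg fun y hy => (hm.trans_le (hbound y hy).2.2.1).le
  -- |T - T'| ≤ S/m * min T T'
  have hkey : |T - T'| ≤ S / m * min T T' := by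
    rcases le_total T T' with h | h
    · rw [abs_of_nonpos (by linarith), min_eq_left h]
      have : T' ≤ T + S / m * T := by
        have := hT'T; rw [hq] at this; nlinarith
      linarith
    · rw [abs_of_nonneg (by linarith), min_eq_right h]
      have : T ≤ T' + S / m * T' := by
        have := hTT'; rw [hq] at this; nlinarith
      linarith
  have hmin0 : 0 ≤ min T T' := le_min hT0 hT'0
  constructor
  · refine hkey.trans ?_
    have h1 : S / m * min T T' ≤ M / m * (S / m * min T T') :=
      le_mul_of_one_le_left (by positivity) ((one_le_div hm).mpr hmM)
    calc S / m * min T T' ≤ M / m * (S / m * min T T') := h1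
      _ = S * (M / m) * min T T' / m := by ring
  · refine hkey.trans ?_
    calc S / m * min T T' ≤ S / m * T' :=
          mul_le_mul_of_nonneg_left (min_le_right _ _) (by positivity)
      _ = S * T' / m := by ring
end

section
/- Let γ be the countable product of standard Gaussians on ℝ^ℕ, (b_i) a summable nonnegative sequence, and J ≥ 1. Then ∫ (∑_{i>J} |u_i| b_i)² · exp(c ∑_{i=1}^∞ |u_i| b_i) dγ(u) ≤ C · (∑_{i>J} b_i)² for a constant C depending only on c and ∑_i b_i (and ∑_i b_i²), but not on J. -/
/-!
Write `A u = ∑' i, |u i| * b i` and `β_J = ∑' i > J, b i`. Cauchy–Schwarz with the weights `b i`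
gives `(∑' i > J, |u i| * b i)² ≤ β_J * ∑' i > J, b i * (u i)²`, so it suffices to bound
`∫ (u i)² e^{c A}` uniformly in `i`; by `x y ≤ x² + y²` this reduces to the fourth Gaussian moment
and to `∫ e^{2 c A}`. The latter is finite because the coordinates are independent and, for a
standard Gaussian `X` and `0 ≤ s ≤ S`, `E e^{s |X|} ≤ 1 + 2 s e^{(S+1)²/2} ≤ e^{K s}`: bounds
linear in `s` in the exponent multiply to `e^{K ∑ s_i}`.
-/

open MeasureTheory ProbabilityTheory

/-- `γ` is the countable product of standard Gaussian measures on `ℝ^ℕ`: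
its finite-dimensional marginals are products of `N(0,1)`. -/
def IsProductStdGaussian (γ : Measure (ℕ → ℝ)) : Prop :=
  IsProjectiveLimit γ (fun I : Finset ℕ => Measure.pi fun _ : I => gaussianReal 0 1)

open Real Filter Topology
open scoped ENNReal

lemma IsProductStdGaussian.eq_infinitePi {γ : Measure (ℕ → ℝ)} (hγ : IsProductStdGaussian γ) :
    γ = Measure.infinitePi fun _ : ℕ => gaussianReal 0 1 :=
  hγ.unique (Measure.isProjectiveLimit_infinitePi _)

lemma lintegral_exp_mul_gaussianReal (s : ℝ) :
    ∫⁻ x, ENNReal.ofReal (exp (s * x)) ∂gaussianReal 0 1 = ENNReal.ofReal (exp (s ^ 2 / 2)) := by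
  rw [← ofReal_integral_eq_lintegral_ofReal (integrable_exp_mul_gaussianReal s)
    (ae_of_all _ fun x => (exp_pos _).le)]
  have hmgf := congrFun (mgf_fun_id_gaussianReal (μ := 0) (v := 1)) s
  simp only [mgf] at hmgf
  simp [hmgf]

lemma lintegral_exp_mul_abs_gaussianReal_le (s : ℝ) :
    ∫⁻ x, ENNReal.ofReal (exp (s * |x|)) ∂gaussianReal 0 1
      ≤ ENNReal.ofReal (2 * exp (s ^ 2 / 2)) := by
  have hpt (x : ℝ) : ENNReal.ofReal (exp (s * |x|))
      ≤ ENNReal.ofReal (exp (s * x)) + ENNReal.ofReal (exp (-s * x)) := by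
    rcases abs_cases x with ⟨hx, _⟩ | ⟨hx, _⟩
    · rw [hx]; exact le_self_add
    · rw [hx, mul_neg, ← neg_mul]; exact le_add_self
  calc ∫⁻ x, ENNReal.ofReal (exp (s * |x|)) ∂gaussianReal 0 1
      ≤ ∫⁻ x, ENNReal.ofReal (exp (s * x)) + ENNReal.ofReal (exp (-s * x)) ∂gaussianReal 0 1 :=
        lintegral_mono hpt
    _ = ENNReal.ofReal (2 * exp (s ^ 2 / 2)) := by
        rw [lintegral_add_left (by fun_prop), lintegral_exp_mul_gaussianReal,
          lintegral_exp_mul_gaussianReal, neg_sq, ← ENNReal.ofReal_add (by positivity)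
          (by positivity), two_mul]

lemma lintegral_exp_mul_abs_gaussianReal_le_exp {s S : ℝ} (hs : 0 ≤ s) (hsS : s ≤ S) :
    ∫⁻ x, ENNReal.ofReal (exp (s * |x|)) ∂gaussianReal 0 1
      ≤ ENNReal.ofReal (exp (2 * exp ((S + 1) ^ 2 / 2) * s)) := by
  have hpt (x : ℝ) : exp (s * |x|) ≤ 1 + s * exp ((S + 1) * |x|) := by
    have h₁ : exp (s * |x|) ≤ 1 + s * |x| * exp (s * |x|) := by
      have := add_one_le_exp (-(s * |x|))
      rw [exp_neg] at this
      have hpos := exp_pos (s * |x|)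
      field_simp at this
      nlinarith
    have h₂ : |x| * exp (s * |x|) ≤ exp ((S + 1) * |x|) := by
      calc |x| * exp (s * |x|) ≤ exp |x| * exp (S * |x|) := by
            gcongr
            linarith [add_one_le_exp |x|]
        _ = exp ((S + 1) * |x|) := by rw [← exp_add]; ring_nf
    nlinarith
  calc ∫⁻ x, ENNReal.ofReal (exp (s * |x|)) ∂gaussianReal 0 1
      ≤ ∫⁻ x, 1 + ENNReal.ofReal s * ENNReal.ofReal (exp ((S + 1) * |x|)) ∂gaussianReal 0 1 := by
        refine lintegral_mono fun x => ?_
        rw [← ENNReal.ofReal_mul hs, ← ENNReal.ofReal_one, ← ENNReal.ofReal_add zero_le_one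
          (by positivity)]
        exact ENNReal.ofReal_le_ofReal (hpt x)
    _ ≤ 1 + ENNReal.ofReal s * ENNReal.ofReal (2 * exp ((S + 1) ^ 2 / 2)) := by
        rw [lintegral_add_left measurable_const, lintegral_const, measure_univ, mul_one,
          lintegral_const_mul _ (by fun_prop)]
        gcongr
        exact lintegral_exp_mul_abs_gaussianReal_le _
    _ ≤ ENNReal.ofReal (exp (2 * exp ((S + 1) ^ 2 / 2) * s)) := by
        rw [← ENNReal.ofReal_mul hs, ← ENNReal.ofReal_one, ← ENNReal.ofReal_add zero_le_one
          (by positivity)]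
        refine ENNReal.ofReal_le_ofReal ?_
        linarith [add_one_le_exp (2 * exp ((S + 1) ^ 2 / 2) * s)]

lemma lintegral_pow_four_gaussianReal_lt_top :
    ∫⁻ x, ENNReal.ofReal (x ^ 4) ∂gaussianReal 0 1 < ∞ := by
  have h := (memLp_id_gaussianReal (μ := 0) (v := 1) 4).integrable_norm_pow (p := 4) (by norm_num)
  simp only [id, Real.norm_eq_abs, Even.pow_abs (by decide : Even 4)] at h
  exact h.lintegral_lt_top

lemma lintegral_exp_tsum_mul_abs_infinitePi_le {μ : Measure ℝ} [IsProbabilityMeasure μ]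
    {s : ℕ → ℝ} (hs : ∀ i, 0 ≤ s i) (hsum : Summable s) {K : ℝ} (hK : 0 ≤ K)
    (h : ∀ i, ∫⁻ x, ENNReal.ofReal (exp (s i * |x|)) ∂μ ≤ ENNReal.ofReal (exp (K * s i))) :
    ∫⁻ u, ENNReal.ofReal (exp (∑' i, s i * |u i|)) ∂Measure.infinitePi (fun _ : ℕ => μ)
      ≤ ENNReal.ofReal (exp (K * ∑' i, s i)) := by
  set F : ℕ → (ℕ → ℝ) → ℝ≥0∞ := fun n u =>
    ∏ i ∈ Finset.range n, ENNReal.ofReal (exp (s i * |u i|)) with hF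
  have hF_eq (n : ℕ) (u : ℕ → ℝ) :
      F n u = ENNReal.ofReal (exp (∑ i ∈ Finset.range n, s i * |u i|)) := by
    rw [exp_sum, ENNReal.ofReal_prod_of_nonneg fun i _ => (exp_pos _).le]
  have hF_mono : Monotone F := fun m n hmn u =>
    Finset.prod_le_prod_of_subset_of_one_le' (Finset.range_subset_range.mpr hmn)
      fun i _ _ => ENNReal.one_le_ofReal.mpr (one_le_exp (by have := hs i; positivity))
  have hF_sup (u : ℕ → ℝ) : ENNReal.ofReal (exp (∑' i, s i * |u i|)) ≤ ⨆ n, F n u := by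
    by_cases hsu : Summable fun i => s i * |u i|
    · have hlim : Tendsto (fun n => ENNReal.ofReal (exp (∑ i ∈ Finset.range n, s i * |u i|)))
          atTop (𝓝 (ENNReal.ofReal (exp (∑' i, s i * |u i|)))) :=
        (ENNReal.continuous_ofReal.comp continuous_exp).tendsto _ |>.comp
          hsu.hasSum.tendsto_sum_nat
      exact le_of_tendsto' hlim fun n => (hF_eq n u).symm.trans_le (le_iSup (F · u) n)
    · rw [tsum_eq_zero_of_not_summable hsu, exp_zero, ENNReal.ofReal_one]
      exact le_iSup_of_le 0 (by simp [hF])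
  have hF_int (n : ℕ) :
      ∫⁻ u, F n u ∂Measure.infinitePi (fun _ : ℕ => μ) ≤ ENNReal.ofReal (exp (K * ∑' i, s i)) := by
    have hindep : iIndepFun (fun i u => ENNReal.ofReal (exp (s i * |u i|)))
        (Measure.infinitePi fun _ : ℕ => μ) :=
      iIndepFun_infinitePi (X := fun i x => ENNReal.ofReal (exp (s i * |x|))) (by fun_prop)
    rw [lintegral_prod_eq_prod_lintegral_of_indepFun _ _ hindep fun i => by fun_prop]
    calc ∏ i ∈ Finset.range n, ∫⁻ u, ENNReal.ofReal (exp (s i * |u i|))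
          ∂Measure.infinitePi (fun _ : ℕ => μ)
        = ∏ i ∈ Finset.range n, ∫⁻ x, ENNReal.ofReal (exp (s i * |x|)) ∂μ := by
          refine Finset.prod_congr rfl fun i _ => ?_
          exact (measurePreserving_eval_infinitePi (fun _ : ℕ => μ) i).lintegral_comp
            (f := fun x : ℝ => ENNReal.ofReal (exp (s i * |x|))) (by fun_prop)
      _ ≤ ∏ i ∈ Finset.range n, ENNReal.ofReal (exp (K * s i)) := Finset.prod_le_prod' fun i _ => h i
      _ = ENNReal.ofReal (exp (K * ∑ i ∈ Finset.range n, s i)) := by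
          rw [Finset.mul_sum, exp_sum, ENNReal.ofReal_prod_of_nonneg fun i _ => (exp_pos _).le]
      _ ≤ ENNReal.ofReal (exp (K * ∑' i, s i)) := by
          gcongr
          exact hsum.sum_le_tsum _ fun i _ => hs i
  calc ∫⁻ u, ENNReal.ofReal (exp (∑' i, s i * |u i|)) ∂Measure.infinitePi (fun _ : ℕ => μ)
      ≤ ∫⁻ u, ⨆ n, F n u ∂Measure.infinitePi (fun _ : ℕ => μ) := lintegral_mono hF_sup
    _ = ⨆ n, ∫⁻ u, F n u ∂Measure.infinitePi (fun _ : ℕ => μ) :=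
        lintegral_iSup (fun n => by fun_prop) hF_mono
    _ ≤ ENNReal.ofReal (exp (K * ∑' i, s i)) := iSup_le hF_int

lemma lintegral_exp_tsum_mul_abs_stdGaussian_lt_top {s : ℕ → ℝ} (hs : ∀ i, 0 ≤ s i)
    (hsum : Summable s) :
    ∫⁻ u, ENNReal.ofReal (exp (∑' i, s i * |u i|))
      ∂Measure.infinitePi (fun _ : ℕ => gaussianReal 0 1) < ∞ :=
  (lintegral_exp_tsum_mul_abs_infinitePi_le hs hsum (by positivity) fun i =>
    lintegral_exp_mul_abs_gaussianReal_le_exp (hs i) (hsum.le_tsum i fun j _ => hs j)).trans_lt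
    ENNReal.ofReal_lt_top

lemma ofReal_tsum_le_tsum_ofReal {ι : Type*} {f : ι → ℝ} (hf : ∀ i, 0 ≤ f i) :
    ENNReal.ofReal (∑' i, f i) ≤ ∑' i, ENNReal.ofReal (f i) := by
  by_cases h : Summable f
  · exact (ENNReal.ofReal_tsum_of_nonneg hf h).le
  · simp [tsum_eq_zero_of_not_summable h]

lemma sq_tsum_ofReal_mul_le {ι : Type*} {v w : ι → ℝ} (hv : ∀ i, 0 ≤ v i) (hw : ∀ i, 0 ≤ w i) :
    (∑' i, ENNReal.ofReal (v i * w i)) ^ 2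
      ≤ (∑' i, ENNReal.ofReal (w i)) * ∑' i, ENNReal.ofReal (v i ^ 2 * w i) := by
  have hfin (s : Finset ι) : (∑ i ∈ s, ENNReal.ofReal (v i * w i)) ^ 2
      ≤ (∑' i, ENNReal.ofReal (w i)) * ∑' i, ENNReal.ofReal (v i ^ 2 * w i) := by
    calc (∑ i ∈ s, ENNReal.ofReal (v i * w i)) ^ 2
        = ENNReal.ofReal ((∑ i ∈ s, v i * w i) ^ 2) := by
          rw [ENNReal.ofReal_pow (Finset.sum_nonneg fun i _ => mul_nonneg (hv i) (hw i)),
            ENNReal.ofReal_sum_of_nonneg fun i _ => mul_nonneg (hv i) (hw i)]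
      _ ≤ ENNReal.ofReal ((∑ i ∈ s, w i) * ∑ i ∈ s, v i ^ 2 * w i) :=
          ENNReal.ofReal_le_ofReal <| Finset.sum_sq_le_sum_mul_sum_of_sq_le_mul s
            (fun i _ => hw i) (fun i _ => mul_nonneg (sq_nonneg _) (hw i))
            fun i _ => le_of_eq (by ring)
      _ = (∑ i ∈ s, ENNReal.ofReal (w i)) * ∑ i ∈ s, ENNReal.ofReal (v i ^ 2 * w i) := by
          rw [ENNReal.ofReal_mul (Finset.sum_nonneg fun i _ => hw i),
            ENNReal.ofReal_sum_of_nonneg fun i _ => hw i,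
            ENNReal.ofReal_sum_of_nonneg fun i _ => mul_nonneg (sq_nonneg _) (hw i)]
      _ ≤ (∑' i, ENNReal.ofReal (w i)) * ∑' i, ENNReal.ofReal (v i ^ 2 * w i) := by
          gcongr <;> exact ENNReal.sum_le_tsum s
  exact le_of_tendsto' ((ENNReal.continuous_pow 2).tendsto _ |>.comp ENNReal.summable.hasSum) hfin

lemma lintegral_mul_le_lintegral_sq_add_lintegral_sq {α : Type*} [MeasurableSpace α]
    (μ : Measure α) {f g : α → ℝ≥0∞} (hf : Measurable f) :
    ∫⁻ a, f a * g a ∂μ ≤ ∫⁻ a, f a ^ 2 ∂μ + ∫⁻ a, g a ^ 2 ∂μ := by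
  rw [← lintegral_add_left (hf.pow_const 2)]
  refine lintegral_mono fun a => ?_
  rcases le_total (f a) (g a) with h | h
  · calc f a * g a ≤ g a ^ 2 := by rw [sq]; gcongr
      _ ≤ f a ^ 2 + g a ^ 2 := le_add_self
  · calc f a * g a ≤ f a ^ 2 := by rw [sq]; gcongr
      _ ≤ f a ^ 2 + g a ^ 2 := le_self_add

lemma lintegral_sq_tsum_abs_mul_mul_le {Ω κ : Type*} [MeasurableSpace Ω] [Countable κ]
    (μ : Measure Ω) {X : κ → Ω → ℝ} (hX : ∀ i, Measurable (X i)) {w : κ → ℝ}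
    (hw : ∀ i, 0 ≤ w i) (hws : Summable w) {E : Ω → ℝ≥0∞} (hE : Measurable E) {M : ℝ≥0∞}
    (hM : ∀ i, ∫⁻ ω, ENNReal.ofReal (X i ω ^ 2) * E ω ∂μ ≤ M) :
    ∫⁻ ω, ENNReal.ofReal ((∑' i, |X i ω| * w i) ^ 2) * E ω ∂μ
      ≤ ENNReal.ofReal ((∑' i, w i) ^ 2) * M := by
  have hβ : ∑' i, ENNReal.ofReal (w i) = ENNReal.ofReal (∑' i, w i) :=
    (ENNReal.ofReal_tsum_of_nonneg hw hws).symm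
  have hpt (ω : Ω) : ENNReal.ofReal ((∑' i, |X i ω| * w i) ^ 2)
      ≤ ENNReal.ofReal (∑' i, w i) * ∑' i, ENNReal.ofReal (w i) * ENNReal.ofReal (X i ω ^ 2) := by
    calc ENNReal.ofReal ((∑' i, |X i ω| * w i) ^ 2)
        = ENNReal.ofReal (∑' i, |X i ω| * w i) ^ 2 :=
          ENNReal.ofReal_pow (tsum_nonneg fun i => mul_nonneg (abs_nonneg _) (hw i)) 2
      _ ≤ (∑' i, ENNReal.ofReal (|X i ω| * w i)) ^ 2 := by
          gcongr
          exact ofReal_tsum_le_tsum_ofReal fun i => mul_nonneg (abs_nonneg _) (hw i)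
      _ ≤ (∑' i, ENNReal.ofReal (w i)) * ∑' i, ENNReal.ofReal (|X i ω| ^ 2 * w i) :=
          sq_tsum_ofReal_mul_le (fun i => abs_nonneg _) hw
      _ = ENNReal.ofReal (∑' i, w i) * ∑' i, ENNReal.ofReal (w i) * ENNReal.ofReal (X i ω ^ 2) := by
          simp_rw [hβ, sq_abs, mul_comm _ (w _), ENNReal.ofReal_mul (hw _)]
  calc ∫⁻ ω, ENNReal.ofReal ((∑' i, |X i ω| * w i) ^ 2) * E ω ∂μ
      ≤ ∫⁻ ω, ENNReal.ofReal (∑' i, w i) *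
          ∑' i, ENNReal.ofReal (w i) * (ENNReal.ofReal (X i ω ^ 2) * E ω) ∂μ := by
        refine lintegral_mono fun ω => ?_
        simp_rw [← mul_assoc, ENNReal.tsum_mul_right]
        rw [← mul_assoc]
        exact mul_le_mul_left (hpt ω) _
    _ = ENNReal.ofReal (∑' i, w i) *
          ∑' i, ENNReal.ofReal (w i) * ∫⁻ ω, ENNReal.ofReal (X i ω ^ 2) * E ω ∂μ := by
        rw [lintegral_const_mul _ (by fun_prop), lintegral_tsum fun i => by fun_prop]
        exact congrArg _ (tsum_congr fun i => lintegral_const_mul _ (by fun_prop))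
    _ ≤ ENNReal.ofReal (∑' i, w i) * ∑' i, ENNReal.ofReal (w i) * M := by gcongr with i; exact hM i
    _ = ENNReal.ofReal ((∑' i, w i) ^ 2) * M := by
        rw [ENNReal.tsum_mul_right, hβ, ← mul_assoc, ← ENNReal.ofReal_mul (tsum_nonneg hw), sq]

lemma exists_lintegral_sq_mul_exp_tsum_stdGaussian_le {b : ℕ → ℝ} (hb : ∀ i, 0 ≤ b i)
    (hsum : Summable b) {c : ℝ} (hc : 0 ≤ c) :
    ∃ M ≠ ∞, ∀ i, ∫⁻ u, ENNReal.ofReal (u i ^ 2) * ENNReal.ofReal (exp (c * ∑' j, |u j| * b j))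
      ∂Measure.infinitePi (fun _ : ℕ => gaussianReal 0 1) ≤ M := by
  set E : (ℕ → ℝ) → ℝ≥0∞ := fun u => ENNReal.ofReal (exp (c * ∑' i, |u i| * b i))
  have hA : Measurable fun u : ℕ → ℝ => ∑' i, |u i| * b i := .tsum fun i => by fun_prop
  have hE_sq (u : ℕ → ℝ) : E u ^ 2 = ENNReal.ofReal (exp (∑' i, 2 * c * b i * |u i|)) := by
    rw [← ENNReal.ofReal_pow (exp_nonneg _), ← exp_nat_mul]
    simp_rw [mul_assoc (2 * c), tsum_mul_left, mul_comm (b _)]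
    push_cast
    ring_nf
  refine ⟨∫⁻ x, ENNReal.ofReal (x ^ 4) ∂gaussianReal 0 1 +
    ∫⁻ u, E u ^ 2 ∂Measure.infinitePi (fun _ : ℕ => gaussianReal 0 1), ?_, fun i => ?_⟩
  · refine (ENNReal.add_lt_top.2 ⟨lintegral_pow_four_gaussianReal_lt_top, ?_⟩).ne
    simp_rw [hE_sq]
    exact lintegral_exp_tsum_mul_abs_stdGaussian_lt_top (fun i => by have := hb i; positivity)
      (hsum.mul_left _)
  · refine (lintegral_mul_le_lintegral_sq_add_lintegral_sq _ (by fun_prop)).trans_eq ?_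
    congr 1
    simp_rw [← ENNReal.ofReal_pow (sq_nonneg _), ← pow_mul]
    exact (measurePreserving_eval_infinitePi (fun _ : ℕ => gaussianReal 0 1) i).lintegral_comp
      (f := fun x : ℝ => ENNReal.ofReal (x ^ 4)) (by fun_prop)

theorem stmt_18_general (γ : Measure (ℕ → ℝ))
    (hγ : IsProductStdGaussian γ) (b : ℕ → ℝ) (hb : ∀ i, 0 ≤ b i)
    (hsum : Summable b) (c : ℝ) (hc : 0 ≤ c) :
    ∃ C > 0, ∀ J : ℕ, 1 ≤ J →
      (∫ u, (∑' i : {i : ℕ // J < i}, |u i| * b i) ^ 2 *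
          Real.exp (c * ∑' i : ℕ, |u i| * b i) ∂γ) ≤
        C * (∑' i : {i : ℕ // J < i}, b i) ^ 2 := by
  obtain rfl := hγ.eq_infinitePi
  obtain ⟨M, hM, hcoord⟩ := exists_lintegral_sq_mul_exp_tsum_stdGaussian_le hb hsum hc
  refine ⟨M.toReal + 1, by positivity, fun J _ => ?_⟩
  have hA : Measurable fun u : ℕ → ℝ => ∑' i, |u i| * b i := .tsum fun i => by fun_prop
  have hAJ : Measurable fun u : ℕ → ℝ => ∑' i : {i : ℕ // J < i}, |u i| * b i :=
    .tsum fun i => by fun_prop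
  rw [integral_eq_lintegral_of_nonneg_ae (ae_of_all _ fun u => by positivity) (by fun_prop)]
  refine ENNReal.toReal_le_of_le_ofReal (by positivity) ?_
  simp_rw [ENNReal.ofReal_mul (sq_nonneg _)]
  calc _ ≤ ENNReal.ofReal ((∑' i : {i : ℕ // J < i}, b i) ^ 2) * M :=
        lintegral_sq_tsum_abs_mul_mul_le _ (X := fun (i : {i : ℕ // J < i}) (u : ℕ → ℝ) => u i)
          (fun i => by fun_prop) (fun i => hb i) (hsum.subtype _) (by fun_prop) fun i => hcoord i
    _ ≤ ENNReal.ofReal ((∑' i : {i : ℕ // J < i}, b i) ^ 2) * ENNReal.ofReal (M.toReal + 1) := by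
        gcongr
        exact (ENNReal.le_ofReal_iff_toReal_le hM (by positivity)).2 (by linarith)
    _ = _ := by rw [← ENNReal.ofReal_mul (sq_nonneg _), mul_comm]

theorem stmt_18 (γ : Measure (ℕ → ℝ)) [IsProbabilityMeasure γ]
    (hγ : IsProductStdGaussian γ) (b : ℕ → ℝ) (hb : ∀ i, 0 ≤ b i)
    (hsum : Summable b) (c : ℝ) (hc : 0 ≤ c) :
    ∃ C > 0, ∀ J : ℕ, 1 ≤ J →
      (∫ u, (∑' i : {i : ℕ // J < i}, |u i| * b i) ^ 2 *
          Real.exp (c * ∑' i : ℕ, |u i| * b i) ∂γ) ≤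
        C * (∑' i : {i : ℕ // J < i}, b i) ^ 2 :=
  stmt_18_general γ hγ b hb hsum c hc
end
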